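/- arXiv:1910.06513 — 4 statements merged into one kernel-verified Lean document; each statement's English description precedes it below -/
import Mathlib

section
/- If f has L_g-Lipschitz continuous gradient, then for all x ∈ ℝ^d, |f_μ(x) − f(x)| ≤ L_g μ²/2. -/
open MeasureTheory Metric
open scoped NNReal

/-- The uniform probability measure on the closed unit Euclidean ball in `ℝ^d`. -/
noncomputable def unifBall (d : ℕ) : Measure (EuclideanSpace ℝ (Fin d)) :=
  (volume (closedBall (0 : EuclideanSpace ℝ (Fin d)) 1))⁻¹ •
    (volume : Measure (EuclideanSpace ℝ (Fin d))).restrict (closedBall 0 1)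

/-- Randomized smoothing `f_μ(x) = E_{u ~ Uniform(unit ball)}[f(x + μ u)]`. -/
noncomputable def smoothed {d : ℕ} (f : EuclideanSpace ℝ (Fin d) → ℝ) (μ : ℝ)
    (x : EuclideanSpace ℝ (Fin d)) : ℝ :=
  ∫ u, f (x + μ • u) ∂(unifBall d)

open scoped RealInnerProductSpace in
lemma descent_lemma {E : Type*} [NormedAddCommGroup E] [InnerProductSpace ℝ E]
    [CompleteSpace E]
    (f : E → ℝ) (Lg : ℝ≥0) (hdiff : Differentiable ℝ f)
    (hgrad : LipschitzWith Lg (gradient f)) (x v : E) :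
    |f (x + v) - f x - ⟪gradient f x, v⟫| ≤ (Lg : ℝ) / 2 * ‖v‖ ^ 2 := by
  set g' : ℝ → ℝ := fun t => ⟪gradient f (x + t • v), v⟫ with hg'
  have hcurve : ∀ t : ℝ, HasDerivAt (fun s : ℝ => x + s • v) v t := by
    intro t
    simpa using ((hasDerivAt_id t).smul_const v).const_add x
  have hderiv : ∀ t : ℝ, HasDerivAt (fun s : ℝ => f (x + s • v)) (g' t) t := by
    intro t
    have hf := ((hdiff (x + t • v)).hasGradientAt).hasFDerivAt
    have := hf.comp_hasDerivAt t (hcurve t)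
    have h2 := this
    simp [hg', InnerProductSpace.toDual] at h2 ⊢
    exact h2
  have hcont : Continuous g' := by
    have hgc : Continuous (gradient f) := hgrad.continuous
    have : Continuous fun t : ℝ => x + t • v := by fun_prop
    exact (hgc.comp this).inner continuous_const
  have hint : IntervalIntegrable g' volume 0 1 := hcont.intervalIntegrable 0 1
  have heq : f (x + v) - f x = ∫ t in (0:ℝ)..1, g' t := by
    have := intervalIntegral.integral_eq_sub_of_hasDerivAt
      (f := fun s : ℝ => f (x + s • v)) (a := 0) (b := 1)
      (fun t _ => hderiv t) hint
    simp at this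
    rw [this]
  have hconst : ⟪gradient f x, v⟫ = ∫ t in (0:ℝ)..1, g' 0 := by simp [hg']
  have hsplit : f (x + v) - f x - ⟪gradient f x, v⟫ = ∫ t in (0:ℝ)..1, (g' t - g' 0) := by
    rw [heq, hconst, intervalIntegral.integral_sub hint intervalIntegrable_const]
  rw [hsplit, ← Real.norm_eq_abs]
  have hbound : ∀ t ∈ Set.Icc (0:ℝ) 1, ‖g' t - g' 0‖ ≤ (Lg : ℝ) * ‖v‖ ^ 2 * t := by
    intro t ht
    have h1 : g' t - g' 0 = ⟪gradient f (x + t • v) - gradient f x, v⟫ := by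
      simp [hg', inner_sub_left]
    rw [h1, Real.norm_eq_abs]
    calc |⟪gradient f (x + t • v) - gradient f x, v⟫|
        ≤ ‖gradient f (x + t • v) - gradient f x‖ * ‖v‖ := abs_real_inner_le_norm _ _
      _ ≤ ((Lg : ℝ) * ‖(x + t • v) - x‖) * ‖v‖ := by
          gcongr
          exact hgrad.norm_sub_le _ _
      _ = (Lg : ℝ) * ‖v‖ ^ 2 * t := by
          rw [add_sub_cancel_left, norm_smul, Real.norm_eq_abs, abs_of_nonneg ht.1]
          ring
  have hintb : IntervalIntegrable (fun t => (Lg : ℝ) * ‖v‖ ^ 2 * t) volume 0 1 := by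
    apply Continuous.intervalIntegrable; fun_prop
  calc ‖∫ t in (0:ℝ)..1, (g' t - g' 0)‖
      ≤ |∫ t in (0:ℝ)..1, (Lg : ℝ) * ‖v‖ ^ 2 * t| := by
        apply intervalIntegral.norm_integral_le_abs_of_norm_le _ hintb
        filter_upwards [ae_restrict_mem measurableSet_uIoc] with t ht
        exact hbound t ⟨le_of_lt (by simpa using ht.1), by simpa using ht.2⟩
    _ = (Lg : ℝ) / 2 * ‖v‖ ^ 2 := by
        rw [intervalIntegral.integral_const_mul, integral_id]
        rw [abs_of_nonneg (by positivity)]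
        ring

open scoped RealInnerProductSpace in
/-- If `f` has `L_g`-Lipschitz continuous gradient, then `|f_μ(x) − f(x)| ≤ L_g μ²/2`. -/
theorem abs_smoothed_sub_le_of_lipschitz_gradient {d : ℕ}
    (f : EuclideanSpace ℝ (Fin d) → ℝ) (Lg : ℝ≥0)
    (hdiff : Differentiable ℝ f) (hgrad : LipschitzWith Lg (gradient f))
    (μ : ℝ) (hμ : 0 < μ) :
    ∀ x : EuclideanSpace ℝ (Fin d), |smoothed f μ x - f x| ≤ Lg * μ ^ 2 / 2 := by
  intro x
  set B : Set (EuclideanSpace ℝ (Fin d)) := closedBall 0 1 with hBdef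
  have hBm : MeasurableSet B := measurableSet_closedBall
  have hB0 : volume B ≠ 0 := (measure_closedBall_pos volume _ one_pos).ne'
  have hBt : volume B ≠ ⊤ := measure_closedBall_lt_top.ne
  have hct : (volume B)⁻¹ ≠ ⊤ := ENNReal.inv_ne_top.2 hB0
  have hprob : IsProbabilityMeasure (unifBall d) := by
    constructor
    rw [unifBall, Measure.smul_apply, Measure.restrict_apply_univ, smul_eq_mul,
      ENNReal.inv_mul_cancel hB0 hBt]
  set g : EuclideanSpace ℝ (Fin d) := gradient f x with hgdef
  have hfc : Continuous f := hdiff.continuous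
  have hi1 : Integrable (fun u => f (x + μ • u)) (unifBall d) := by
    rw [unifBall]
    refine Integrable.smul_measure ?_ hct
    exact ((hfc.comp (by fun_prop)).continuousOn).integrableOn_compact
      (isCompact_closedBall _ _)
  have hi2 : Integrable (fun u : EuclideanSpace ℝ (Fin d) => ⟪g, μ • u⟫) (unifBall d) := by
    rw [unifBall]
    refine Integrable.smul_measure ?_ hct
    exact (Continuous.continuousOn
      (continuous_const.inner (continuous_id.const_smul μ))).integrableOn_compact
      (isCompact_closedBall _ _)
  have hneg : MeasurePreserving (Neg.neg : EuclideanSpace ℝ (Fin d) → EuclideanSpace ℝ (Fin d))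
      (volume.restrict B) (volume.restrict B) := by
    constructor
    · exact measurable_neg
    · have hpre : (Neg.neg : EuclideanSpace ℝ (Fin d) → EuclideanSpace ℝ (Fin d)) ⁻¹' B = B := by
        ext u; simp [hBdef]
      rw [← hpre, ← Measure.restrict_map measurable_neg hBm, hpre,
        Measure.map_neg_eq_self]
  have hkey : ∫ u, ⟪g, u⟫ ∂(volume.restrict B) = 0 := by
    have h1 : ∫ u, ⟪g, -u⟫ ∂(volume.restrict B) = ∫ u, ⟪g, u⟫ ∂(volume.restrict B) :=
      hneg.integral_comp (MeasurableEquiv.neg (EuclideanSpace ℝ (Fin d))).measurableEmbedding _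
    simp only [inner_neg_right, integral_neg] at h1
    linarith
  have hzero : ∫ u, ⟪g, μ • u⟫ ∂(unifBall d) = 0 := by
    rw [unifBall, integral_smul_measure]
    simp only [real_inner_smul_right]
    rw [integral_const_mul, hkey]
    simp
  have hi3 : Integrable (fun u => f (x + μ • u) - f x) (unifBall d) :=
    hi1.sub (integrable_const _)
  have hdecomp : smoothed f μ x - f x
      = ∫ u, (f (x + μ • u) - f x - ⟪g, μ • u⟫) ∂(unifBall d) := by
    rw [smoothed, integral_sub hi3 hi2,
      integral_sub hi1 (integrable_const _), integral_const, hzero]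
    simp [measure_univ]
  rw [hdecomp, ← Real.norm_eq_abs]
  have hae : ∀ᵐ u ∂(unifBall d),
      ‖f (x + μ • u) - f x - ⟪g, μ • u⟫‖ ≤ (Lg : ℝ) * μ ^ 2 / 2 := by
    rw [unifBall]
    refine Measure.ae_smul_measure ?_ _
    filter_upwards [ae_restrict_mem hBm] with u hu
    have hu1 : ‖u‖ ≤ 1 := by simpa [hBdef] using hu
    have hd := descent_lemma f Lg hdiff hgrad x (μ • u)
    rw [Real.norm_eq_abs]
    refine hd.trans ?_
    have hn : ‖μ • u‖ ^ 2 ≤ μ ^ 2 := by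
      rw [norm_smul, Real.norm_eq_abs, abs_of_pos hμ]
      have h2 : ‖u‖ ^ 2 ≤ 1 := by nlinarith [norm_nonneg u]
      calc (μ * ‖u‖) ^ 2 = μ ^ 2 * ‖u‖ ^ 2 := by ring
        _ ≤ μ ^ 2 * 1 := by nlinarith [sq_nonneg μ]
        _ = μ ^ 2 := by ring
    nlinarith [Lg.coe_nonneg]
  calc ‖∫ u, (f (x + μ • u) - f x - ⟪g, μ • u⟫) ∂(unifBall d)‖
      ≤ (Lg : ℝ) * μ ^ 2 / 2 * ((unifBall d) Set.univ).toReal :=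
        norm_integral_le_of_norm_le_const hae
    _ = Lg * μ ^ 2 / 2 := by simp [measure_univ]
end

section
/- For the linear program minimize −2x₁ − x₂ subject to |x₁ + x₂| ≤ 1, the point (0.5, 0.5) is a fixed point of the Euclidean-projected sign gradient descent iteration x_{t+1} = Π_X(x_t − α_t · sign(∇f(x_t))), for every step size α_t > 0, yet (0.5, 0.5) is not a stationary point of the constrained problem. -/
open scoped RealInnerProductSpace

lemma sign_gd_aux (α a b : ℝ) (hα : 0 < α) (hsum : a + b ≤ 1)
    (h : (1/2 + α - a)^2 + (1/2 + α - b)^2 ≤ (1/2 + α - 1/2)^2 + (1/2 + α - 1/2)^2) :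
    a = 1/2 ∧ b = 1/2 := by
  have h1 : 0 ≤ (1/2 + α - a) + (1/2 + α - b) - 2*α := by linarith
  constructor
  · nlinarith [sq_nonneg (1/2 - a), sq_nonneg (1/2 - b), mul_nonneg hα.le h1]
  · nlinarith [sq_nonneg (1/2 - a), sq_nonneg (1/2 - b), mul_nonneg hα.le h1]

lemma sign_gd_dist_sq (y p : EuclideanSpace ℝ (Fin 2)) :
    dist y p ^ 2 = (y 0 - p 0)^2 + (y 1 - p 1)^2 := by
  rw [EuclideanSpace.dist_eq, Real.sq_sqrt (by positivity)]
  simp [Fin.sum_univ_two, Real.dist_eq, sq_abs]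

/-- For the LP `min −2x₁ − x₂  s.t. |x₁ + x₂| ≤ 1`, the point `(1/2, 1/2)` is a fixed
point of Euclidean-projected sign gradient descent for every step size `α > 0`
(its projection onto the feasible set is itself), yet it is not a stationary point. -/
theorem euclidean_projected_signGD_nonconvergence
    (X : Set (EuclideanSpace ℝ (Fin 2))) (f : EuclideanSpace ℝ (Fin 2) → ℝ)
    (xstar : EuclideanSpace ℝ (Fin 2))
    (hX : X = {x | |x 0 + x 1| ≤ 1})
    (hf : f = fun x => -2 * x 0 - x 1)
    (hxstar : xstar = (WithLp.equiv 2 (Fin 2 → ℝ)).symm ![1/2, 1/2]) :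
    (∀ α : ℝ, 0 < α → ∀ p ∈ X,
      (∀ z ∈ X,
          dist (xstar - α • (WithLp.equiv 2 (Fin 2 → ℝ)).symm
              (fun i => Real.sign (gradient f xstar i))) p
            ≤ dist (xstar - α • (WithLp.equiv 2 (Fin 2 → ℝ)).symm
              (fun i => Real.sign (gradient f xstar i))) z) →
        p = xstar) ∧
    ¬ (∀ z ∈ X, 0 ≤ ⟪gradient f xstar, z - xstar⟫) := by
  -- compute the gradient
  have hgrad : gradient f xstar = (WithLp.equiv 2 (Fin 2 → ℝ)).symm ![-2, -1] := by
    set v : EuclideanSpace ℝ (Fin 2) := (WithLp.equiv 2 (Fin 2 → ℝ)).symm ![(-2:ℝ), -1] with hv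
    have h1 : HasGradientAt f v xstar := by
      rw [hasGradientAt_iff_hasFDerivAt]
      have hfe : f = ⇑(InnerProductSpace.toDual ℝ (EuclideanSpace ℝ (Fin 2)) v) := by
        funext x
        simp [hf, InnerProductSpace.toDual_apply_apply, PiLp.inner_apply, Fin.sum_univ_two, hv]
        ring
      rw [hfe]
      exact (InnerProductSpace.toDual ℝ (EuclideanSpace ℝ (Fin 2)) v).hasFDerivAt
    exact h1.gradient
  have hgrad0 : gradient f xstar 0 = -2 := by rw [hgrad]; rfl
  have hgrad1 : gradient f xstar 1 = -1 := by rw [hgrad]; rfl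
  have hsign : (fun i => Real.sign (gradient f xstar i)) = fun _ : Fin 2 => (-1 : ℝ) := by
    funext i
    fin_cases i
    · show Real.sign (gradient f xstar 0) = -1
      rw [hgrad0]; exact Real.sign_of_neg (by norm_num)
    · show Real.sign (gradient f xstar 1) = -1
      rw [hgrad1]; exact Real.sign_of_neg (by norm_num)
  have hx0 : xstar 0 = 1/2 := by rw [hxstar]; rfl
  have hx1 : xstar 1 = 1/2 := by rw [hxstar]; rfl
  constructor
  · intro α hα p hp hmin
    rw [hsign] at hmin
    obtain ⟨y, hy⟩ :
        ∃ y, xstar - α • (WithLp.equiv 2 (Fin 2 → ℝ)).symm (fun _ : Fin 2 => (-1 : ℝ)) = y :=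
      ⟨_, rfl⟩
    rw [hy] at hmin
    have hy0 : y 0 = 1/2 + α := by
      rw [← hy]; simp [hx0, PiLp.sub_apply, PiLp.smul_apply]
    have hy1 : y 1 = 1/2 + α := by
      rw [← hy]; simp [hx1, PiLp.sub_apply, PiLp.smul_apply]
    clear hy
    have hxX : xstar ∈ X := by
      rw [hX]; simp [hx0, hx1]; norm_num
    have hkey := hmin xstar hxX
    have hdsq : dist y p ^ 2 ≤ dist y xstar ^ 2 := by
      have h0 : (0:ℝ) ≤ dist y xstar := dist_nonneg
      nlinarith [dist_nonneg (x := y) (y := p)]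
    rw [sign_gd_dist_sq y p, sign_gd_dist_sq y xstar, hy0, hy1, hx0, hx1] at hdsq
    have hpX : |p 0 + p 1| ≤ 1 := by rw [hX] at hp; exact hp
    have hsum : p 0 + p 1 ≤ 1 := (abs_le.mp hpX).2
    obtain ⟨hp0, hp1⟩ := sign_gd_aux α (p 0) (p 1) hα hsum hdsq
    clear hmin hkey hdsq hy0 hy1 hxX hpX hsum hp hsign hgrad hgrad0 hgrad1
    ext i
    fin_cases i
    · show p 0 = xstar 0
      rw [hp0, hx0]
    · show p 1 = xstar 1
      rw [hp1, hx1]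
  · intro h
    set z : EuclideanSpace ℝ (Fin 2) := (WithLp.equiv 2 (Fin 2 → ℝ)).symm ![1, 0] with hz
    have hzX : z ∈ X := by
      rw [hX]
      have : z 0 + z 1 = 1 := by simp [hz]
      simp [Set.mem_setOf_eq, this]
    have := h z hzX
    rw [PiLp.inner_apply, Fin.sum_univ_two] at this
    have hz0 : z 0 = 1 := rfl
    have hz1 : z 1 = 0 := rfl
    rw [hgrad0, hgrad1] at this
    simp [PiLp.sub_apply, hz0, hz1, hx0, hx1] at this
    norm_num at this
end

section
/- For the exponential moving averages m_t = β₁ m_{t−1} + (1−β₁) g_t and v_t = β₂ v_{t−1} + (1−β₂) g_t² (elementwise) with m₀ = v₀ = 0, 0 < β₁ < β₂ < 1, and γ := β₁/β₂ < 1, the coordinate-wise normalized update satisfies ‖m_t / √v_t‖² ≤ d · (1−β₁)/((1−β₂)(1−γ)), where the division and square root are elementwise (over coordinates where v_t > 0). -/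
/-! Coordinatewise, Cauchy–Schwarz with the weights `β₁^(T-j)` bounds the squared momentum by
`(∑ β₁^(T-j)) (∑ β₁^(T-j) g_j²)`. The first factor is a truncated geometric series, at most
`1 / (1 - β₁)`, and since `β₁ ≤ β₂` the second is at most the unnormalized second moment
`∑ β₂^(T-j) g_j²`. Hence each coordinate contributes at most `(1 - β₁) / (1 - β₂)`, which is
at most the claimed constant because `0 < 1 - β₁/β₂ ≤ 1`. -/

open Finset

theorem sum_Icc_pow_sub_eq_sum_range {R : Type*} [CommSemiring R] (x : R) (T : ℕ) :
    ∑ j ∈ Icc 1 T, x ^ (T - j) = ∑ k ∈ range T, x ^ k := by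
  refine sum_bij' (fun j _ ↦ T - j) (fun k _ ↦ T - k) ?_ ?_ ?_ ?_ fun _ _ ↦ rfl <;>
    intro j hj <;> simp only [mem_Icc, mem_range] at hj ⊢ <;> omega

theorem one_sub_mul_sum_Icc_pow_sub_le_one {β : ℝ} (hβ : 0 ≤ β) (T : ℕ) :
    (1 - β) * ∑ j ∈ Icc 1 T, β ^ (T - j) ≤ 1 := by
  rw [sum_Icc_pow_sub_eq_sum_range, mul_neg_geom_sum]
  linarith [pow_nonneg hβ T]

theorem sq_sum_mul_le_sum_mul_sum_mul_sq {ι : Type*} (s : Finset ι) {w : ι → ℝ}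
    (hw : ∀ i ∈ s, 0 ≤ w i) (a : ι → ℝ) :
    (∑ i ∈ s, w i * a i) ^ 2 ≤ (∑ i ∈ s, w i) * ∑ i ∈ s, w i * a i ^ 2 :=
  sum_sq_le_sum_mul_sum_of_sq_le_mul s hw (fun i hi ↦ mul_nonneg (hw i hi) (sq_nonneg _))
    fun i _ ↦ le_of_eq (by ring)

theorem sq_ema_le_one_sub_mul_ema_sq {β₁ β₂ : ℝ} (h1 : 0 ≤ β₁) (h1' : β₁ ≤ 1) (h12 : β₁ ≤ β₂)
    (T : ℕ) (a : ℕ → ℝ) :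
    ((1 - β₁) * ∑ j ∈ Icc 1 T, β₁ ^ (T - j) * a j) ^ 2
      ≤ (1 - β₁) * ∑ j ∈ Icc 1 T, β₂ ^ (T - j) * a j ^ 2 := by
  have hw : ∀ j ∈ Icc 1 T, 0 ≤ β₁ ^ (T - j) := fun j _ ↦ pow_nonneg h1 _
  have hQ : 0 ≤ ∑ j ∈ Icc 1 T, β₁ ^ (T - j) * a j ^ 2 :=
    sum_nonneg fun j hj ↦ mul_nonneg (hw j hj) (sq_nonneg _)
  have hQV : ∑ j ∈ Icc 1 T, β₁ ^ (T - j) * a j ^ 2 ≤ ∑ j ∈ Icc 1 T, β₂ ^ (T - j) * a j ^ 2 :=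
    sum_le_sum fun j _ ↦ mul_le_mul_of_nonneg_right (pow_le_pow_left₀ h1 h12 _) (sq_nonneg _)
  have hP := one_sub_mul_sum_Icc_pow_sub_le_one h1 T
  have hCS := sq_sum_mul_le_sum_mul_sum_mul_sq (Icc 1 T) hw a
  have hβ₁ : 0 ≤ 1 - β₁ := sub_nonneg.2 h1'
  calc _ = (1 - β₁) ^ 2 * (∑ j ∈ Icc 1 T, β₁ ^ (T - j) * a j) ^ 2 := mul_pow ..
    _ ≤ (1 - β₁) ^ 2 * ((∑ j ∈ Icc 1 T, β₁ ^ (T - j)) * ∑ j ∈ Icc 1 T, β₁ ^ (T - j) * a j ^ 2) :=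
        mul_le_mul_of_nonneg_left hCS (sq_nonneg _)
    _ = (1 - β₁) * (((1 - β₁) * ∑ j ∈ Icc 1 T, β₁ ^ (T - j)) *
          ∑ j ∈ Icc 1 T, β₁ ^ (T - j) * a j ^ 2) := by ring
    _ ≤ (1 - β₁) * (1 * ∑ j ∈ Icc 1 T, β₂ ^ (T - j) * a j ^ 2) := by gcongr
    _ = _ := by rw [one_mul]

theorem ema_sq_div_ema_sq_le {β₁ β₂ : ℝ} (h1 : 0 ≤ β₁) (h12 : β₁ ≤ β₂) (h2 : β₂ < 1) (T : ℕ)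
    (a : ℕ → ℝ) :
    ((1 - β₁) * ∑ j ∈ Icc 1 T, β₁ ^ (T - j) * a j) ^ 2
        / ((1 - β₂) * ∑ j ∈ Icc 1 T, β₂ ^ (T - j) * a j ^ 2)
      ≤ (1 - β₁) / (1 - β₂) := by
  have hβ₂ : 0 < 1 - β₂ := sub_pos.2 h2
  refine div_le_of_le_mul₀ (mul_nonneg hβ₂.le (sum_nonneg fun j _ ↦ mul_nonneg
    (pow_nonneg (h1.trans h12) _) (sq_nonneg _))) (div_nonneg (by linarith) hβ₂.le) ?_
  rw [← mul_assoc, div_mul_cancel₀ _ hβ₂.ne']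
  exact sq_ema_le_one_sub_mul_ema_sq h1 (h12.trans h2.le) h12 T a

theorem normalized_momentum_sq_bound_general {d : ℕ} (T : ℕ)
    (g : ℕ → Fin d → ℝ) (β₁ β₂ : ℝ) (h1 : 0 < β₁) (h12 : β₁ < β₂) (h2 : β₂ < 1) :
    ∑ i : Fin d,
        ((1 - β₁) * ∑ j ∈ Finset.Icc 1 T, β₁ ^ (T - j) * g j i) ^ 2
          / ((1 - β₂) * ∑ j ∈ Finset.Icc 1 T, β₂ ^ (T - j) * g j i ^ 2)
      ≤ d * ((1 - β₁) / ((1 - β₂) * (1 - β₁ / β₂))) := by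
  have hγ : 0 < 1 - β₁ / β₂ := sub_pos.2 ((div_lt_one (h1.trans h12)).2 h12)
  have hγ' : 1 - β₁ / β₂ ≤ 1 := by linarith [div_pos h1 (h1.trans h12)]
  have hβ₂ : 0 < 1 - β₂ := sub_pos.2 h2
  have hconst : (1 - β₁) / (1 - β₂) ≤ (1 - β₁) / ((1 - β₂) * (1 - β₁ / β₂)) :=
    div_le_div_of_nonneg_left (by linarith) (mul_pos hβ₂ hγ) (mul_le_of_le_one_right hβ₂.le hγ')
  calc _ ≤ ∑ _i : Fin d, (1 - β₁) / ((1 - β₂) * (1 - β₁ / β₂)) :=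
        sum_le_sum fun i _ ↦ (ema_sq_div_ema_sq_le h1.le h12.le h2 T (g · i)).trans hconst
    _ = _ := by rw [sum_const, card_univ, Fintype.card_fin, nsmul_eq_mul]

/-- For the exponential moving averages `m_T = (1−β₁)∑_{j=1}^T β₁^{T−j} g_j` and
`v_T = (1−β₂)∑_{j=1}^T β₂^{T−j} g_j²` (elementwise) with `0 < β₁ < β₂ < 1` and
`γ = β₁/β₂ < 1`, the normalized update satisfies
`‖m_T/√v_T‖² ≤ d(1−β₁)/((1−β₂)(1−γ))` (the quotient is `0` where `v_T = 0`). -/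
theorem normalized_momentum_sq_bound {d : ℕ} (T : ℕ) (hT : 1 ≤ T)
    (g : ℕ → Fin d → ℝ) (β₁ β₂ : ℝ) (h1 : 0 < β₁) (h12 : β₁ < β₂) (h2 : β₂ < 1) :
    ∑ i : Fin d,
        ((1 - β₁) * ∑ j ∈ Finset.Icc 1 T, β₁ ^ (T - j) * g j i) ^ 2
          / ((1 - β₂) * ∑ j ∈ Finset.Icc 1 T, β₂ ^ (T - j) * g j i ^ 2)
      ≤ d * ((1 - β₁) / ((1 - β₂) * (1 - β₁ / β₂))) :=
  normalized_momentum_sq_bound_general T g β₁ β₂ h1 h12 h2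
end

section
/- Let f : ℝ^d → ℝ have L_g-Lipschitz gradient and let z_t = x_t + (β₁/(1−β₁))(x_t − x_{t−1}) with β₁ ∈ [0,1). Then f(z_{t+1}) − f(z_t) ≤ ⟨∇f(x_t), z_{t+1} − z_t⟩ + (2L_g/(1−β₁)²)‖x_{t+1} − x_t‖² + (5 L_g β₁²/(2(1−β₁)²))‖x_t − x_{t−1}‖². -/
open scoped RealInnerProductSpace

/-!
Apply the descent lemma between `z_t` and `z_{t+1}`, then trade `∇f(z_t)` for `∇f(x_t)`: by
Cauchy–Schwarz, the Lipschitz bound and Young's inequality this costs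
`L‖z_{t+1} - z_t‖²/2 + L‖z_t - x_t‖²/2`. Finally `z_t - x_t = (β₁/(1-β₁))(x_t - x_{t-1})` and
`z_{t+1} - z_t = (x_{t+1} - x_t)/(1-β₁) - (β₁/(1-β₁))(x_t - x_{t-1})`, whose squared norm is at most
twice the sum of the squared norms of the two parts.
-/

section LipschitzGradient

variable {E : Type*} [NormedAddCommGroup E] [InnerProductSpace ℝ E] [CompleteSpace E]
  {f : E → ℝ} {L : ℝ}

theorem sub_le_inner_gradient_add_sq_of_lipschitz_gradient (hf : Differentiable ℝ f)
    (hL : ∀ x y, ‖gradient f x - gradient f y‖ ≤ L * ‖x - y‖) (x y : E) :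
    f y - f x ≤ ⟪gradient f x, y - x⟫ + L / 2 * ‖y - x‖ ^ 2 := by
  set v := y - x
  -- `φ` is monotone on `[0, ∞)`: its derivative is `⟪∇f x - ∇f (x + t v), v⟫ + L t ‖v‖² ≥ 0`.
  let φ : ℝ → ℝ := fun t ↦ t * ⟪gradient f x, v⟫ + L / 2 * t ^ 2 * ‖v‖ ^ 2 - f (x + t • v)
  have hφ : ∀ t, HasDerivAt φ
      (⟪gradient f x - gradient f (x + t • v), v⟫ + L * t * ‖v‖ ^ 2) t := by
    intro t
    have hline : HasDerivAt (fun t : ℝ ↦ x + t • v) v t := by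
      simpa using ((hasDerivAt_id t).smul_const v).const_add x
    have hfline := (hf (x + t • v)).hasGradientAt.hasFDerivAt.comp_hasDerivAt t hline
    rw [InnerProductSpace.toDual_apply_apply] at hfline
    refine ((((hasDerivAt_id t).mul_const _).add
      (((hasDerivAt_pow 2 t).const_mul (L / 2)).mul_const _)).sub hfline).congr_deriv ?_
    rw [inner_sub_left]
    simp only [inner_gradient_left, Nat.cast_ofNat]
    ring
  have hmono : MonotoneOn φ (Set.Ici 0) := by
    refine monotoneOn_of_hasDerivWithinAt_nonneg (convex_Ici 0)
      (fun t _ ↦ (hφ t).continuousAt.continuousWithinAt) (fun t _ ↦ (hφ t).hasDerivWithinAt) ?_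
    rw [interior_Ici]
    intro t (ht : 0 < t)
    have hdist : ‖gradient f x - gradient f (x + t • v)‖ ≤ L * (t * ‖v‖) := by
      simpa [norm_smul, abs_of_pos ht] using hL x (x + t • v)
    calc 0 = -(L * (t * ‖v‖) * ‖v‖) + L * t * ‖v‖ ^ 2 := by ring
      _ ≤ -(‖gradient f x - gradient f (x + t • v)‖ * ‖v‖) + L * t * ‖v‖ ^ 2 := by
          gcongr ?_ + _
          exact neg_le_neg (mul_le_mul_of_nonneg_right hdist (norm_nonneg _))
      _ ≤ _ := by gcongr; exact neg_le_of_abs_le (abs_real_inner_le_norm _ _)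
  have h01 : φ 0 ≤ φ 1 := hmono Set.self_mem_Ici (Set.mem_Ici.2 zero_le_one) zero_le_one
  simp only [φ, v, zero_mul, zero_smul, add_zero, one_mul, one_smul, add_sub_cancel] at h01
  linarith

theorem sub_le_inner_gradient_at_add_sq_of_lipschitz_gradient (hf : Differentiable ℝ f)
    (hL : ∀ x y, ‖gradient f x - gradient f y‖ ≤ L * ‖x - y‖) (hL₀ : 0 ≤ L) (x z y : E) :
    f y - f z ≤ ⟪gradient f x, y - z⟫ + L * ‖y - z‖ ^ 2 + L / 2 * ‖z - x‖ ^ 2 := by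
  have hcross : ⟪gradient f z - gradient f x, y - z⟫
      ≤ L / 2 * ‖z - x‖ ^ 2 + L / 2 * ‖y - z‖ ^ 2 :=
    calc ⟪gradient f z - gradient f x, y - z⟫
        ≤ ‖gradient f z - gradient f x‖ * ‖y - z‖ := real_inner_le_norm _ _
      _ ≤ L * ‖z - x‖ * ‖y - z‖ := by gcongr; exact hL z x
      _ ≤ L / 2 * ‖z - x‖ ^ 2 + L / 2 * ‖y - z‖ ^ 2 := by
          nlinarith [mul_nonneg hL₀ (sq_nonneg (‖z - x‖ - ‖y - z‖))]
  have hdesc := sub_le_inner_gradient_add_sq_of_lipschitz_gradient hf hL z y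
  rw [inner_sub_left] at hcross
  linarith

end LipschitzGradient

theorem norm_sub_sq_le_two_mul {G : Type*} [SeminormedAddCommGroup G] (a b : G) :
    ‖a - b‖ ^ 2 ≤ 2 * (‖a‖ ^ 2 + ‖b‖ ^ 2) :=
  (pow_le_pow_left₀ (norm_nonneg _) (norm_sub_le a b) 2).trans add_sq_le

/-- Descent-type bound along the auxiliary sequence `z_t = x_t + (β₁/(1−β₁))(x_t − x_{t−1})`:
if `f` has `L_g`-Lipschitz gradient and `β₁ ∈ [0,1)`, then
`f(z_{t+1}) − f(z_t) ≤ ⟨∇f(x_t), z_{t+1} − z_t⟩ + (2L_g/(1−β₁)²)‖x_{t+1} − x_t‖²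
  + (5L_gβ₁²/(2(1−β₁)²))‖x_t − x_{t−1}‖²`. -/
theorem descent_along_z {d : ℕ}
    (f : EuclideanSpace ℝ (Fin d) → ℝ) (Lg : ℝ) (hLg : 0 ≤ Lg)
    (hdiff : Differentiable ℝ f)
    (hgrad : ∀ x y, ‖gradient f x - gradient f y‖ ≤ Lg * ‖x - y‖)
    (β₁ : ℝ) (hβ : β₁ ∈ Set.Ico (0 : ℝ) 1)
    (xm x₀ xp : EuclideanSpace ℝ (Fin d)) :
    f (xp + (β₁ / (1 - β₁)) • (xp - x₀)) - f (x₀ + (β₁ / (1 - β₁)) • (x₀ - xm))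
      ≤ ⟪gradient f x₀,
            (xp + (β₁ / (1 - β₁)) • (xp - x₀)) - (x₀ + (β₁ / (1 - β₁)) • (x₀ - xm))⟫
        + 2 * Lg / (1 - β₁) ^ 2 * ‖xp - x₀‖ ^ 2
        + 5 * Lg * β₁ ^ 2 / (2 * (1 - β₁) ^ 2) * ‖x₀ - xm‖ ^ 2 := by
  obtain ⟨hβ₀, hβ₁⟩ := hβ
  have hgap : 0 < 1 - β₁ := sub_pos.2 hβ₁
  set s := β₁ / (1 - β₁) with hs
  have hs₀ : 0 ≤ s := div_nonneg hβ₀ hgap.le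
  have hz_sub : (xp + s • (xp - x₀)) - (x₀ + s • (x₀ - xm))
      = (1 - β₁)⁻¹ • (xp - x₀) - s • (x₀ - xm) := by
    have h1s : 1 + s = (1 - β₁)⁻¹ := by rw [hs]; field_simp; ring
    rw [← h1s]
    module
  have hz_x₀ : ‖x₀ + s • (x₀ - xm) - x₀‖ = s * ‖x₀ - xm‖ := by
    rw [add_sub_cancel_left, norm_smul, Real.norm_of_nonneg hs₀]
  have hz_sub_sq := norm_sub_sq_le_two_mul ((1 - β₁)⁻¹ • (xp - x₀)) (s • (x₀ - xm))
  rw [norm_smul, norm_smul, Real.norm_of_nonneg (inv_pos.2 hgap).le,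
    Real.norm_of_nonneg hs₀, ← hz_sub] at hz_sub_sq
  have hdesc := sub_le_inner_gradient_at_add_sq_of_lipschitz_gradient hdiff hgrad hLg x₀
    (x₀ + s • (x₀ - xm)) (xp + s • (xp - x₀))
  rw [hz_x₀] at hdesc
  have hLz_sub := mul_le_mul_of_nonneg_left hz_sub_sq hLg
  have hcoef : Lg * (2 * (((1 - β₁)⁻¹ * ‖xp - x₀‖) ^ 2 + (s * ‖x₀ - xm‖) ^ 2))
      + Lg / 2 * (s * ‖x₀ - xm‖) ^ 2
      = 2 * Lg / (1 - β₁) ^ 2 * ‖xp - x₀‖ ^ 2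
        + 5 * Lg * β₁ ^ 2 / (2 * (1 - β₁) ^ 2) * ‖x₀ - xm‖ ^ 2 := by
    rw [hs]
    field_simp
    ring
  linarith
end
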